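/- arXiv:1803.08471 — 2 statements merged into one kernel-verified Lean document; each statement's English description precedes it below -/
import Mathlib

section
/- Let α ∈ (0,1), let V be a positive integer, and let N be a positive integer. Let y, y' : Fin V → ℕ be two count vectors satisfying Σ_{v} |(y v : ℤ) - (y' v : ℤ)| ≤ N. Then for every output z : Fin V → ℤ, the likelihood ratio of the geometric mechanism is pointwise bounded: ∏_{v} 2Geo(z v - y v; α) ≤ α^{-N} · ∏_{v} 2Geo(z v - y' v; α). -/
/-! Shifting the centre of `2Geo` by `δ` changes it by a factor of at most `α^{-|δ|}`, by the
triangle inequality `|τ| ≤ |τ - σ| + |σ|` in the exponent; over the coordinates these factors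
multiply to `α^{-‖y - y'‖₁} ≤ α^{-N}`. -/

open scoped BigOperators

/-- The two-sided geometric pmf with parameter `α`: `2Geo(τ; α) = ((1-α)/(1+α)) · α^|τ|`. -/
noncomputable def twoGeoPMF (α : ℝ) (τ : ℤ) : ℝ := ((1 - α) / (1 + α)) * α ^ τ.natAbs

section

variable {α : ℝ}

lemma twoGeoPMF_nonneg (hα0 : 0 ≤ α) (hα1 : α ≤ 1) (τ : ℤ) : 0 ≤ twoGeoPMF α τ :=
  mul_nonneg (div_nonneg (by linarith) (by linarith)) (pow_nonneg hα0 _)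

lemma pow_natAbs_sub_mul_twoGeoPMF_le (hα0 : 0 ≤ α) (hα1 : α ≤ 1) (σ τ : ℤ) :
    α ^ (τ - σ).natAbs * twoGeoPMF α σ ≤ twoGeoPMF α τ := by
  have htri : τ.natAbs ≤ (τ - σ).natAbs + σ.natAbs := by
    simpa only [sub_add_cancel] using Int.natAbs_add_le (τ - σ) σ
  rw [twoGeoPMF, twoGeoPMF, mul_left_comm, ← pow_add]
  exact mul_le_mul_of_nonneg_left (pow_le_pow_of_le_one hα0 hα1 htri)
    (div_nonneg (by linarith) (by linarith))

end

lemma Finset.pow_sum_mul_prod_le_prod {ι R : Type*} [CommSemiring R] [PartialOrder R]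
    [IsOrderedRing R] {a : R} (ha : 0 ≤ a) (s : Finset ι) {d : ι → ℕ} {f g : ι → R}
    (hf : ∀ i ∈ s, 0 ≤ f i) (hfg : ∀ i ∈ s, a ^ d i * f i ≤ g i) :
    a ^ (∑ i ∈ s, d i) * ∏ i ∈ s, f i ≤ ∏ i ∈ s, g i := by
  rw [← Finset.prod_pow_eq_pow_sum, ← Finset.prod_mul_distrib]
  exact Finset.prod_le_prod (fun i hi => mul_nonneg (pow_nonneg ha _) (hf i hi)) hfg

theorem geometric_mechanism_pointwise_likelihood_ratio_general
    (α : ℝ) (hα0 : 0 < α) (hα1 : α < 1) (V : ℕ) (N : ℕ)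
    (y y' : Fin V → ℕ)
    (hdist : ∑ v : Fin V, |(y v : ℤ) - (y' v : ℤ)| ≤ (N : ℤ))
    (z : Fin V → ℤ) :
    ∏ v : Fin V, twoGeoPMF α (z v - (y v : ℤ)) ≤
      α ^ (-(N : ℤ)) * ∏ v : Fin V, twoGeoPMF α (z v - (y' v : ℤ)) := by
  have hdist' : ∑ v : Fin V, ((y v : ℤ) - y' v).natAbs ≤ N := by
    simpa only [← Int.natCast_natAbs, ← Nat.cast_sum, Nat.cast_le] using hdist
  rw [zpow_neg, zpow_natCast, le_inv_mul_iff₀ (pow_pos hα0 N)]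
  calc α ^ N * ∏ v, twoGeoPMF α (z v - y v)
      ≤ α ^ (∑ v, ((y v : ℤ) - y' v).natAbs) * ∏ v, twoGeoPMF α (z v - y v) :=
        mul_le_mul_of_nonneg_right (pow_le_pow_of_le_one hα0.le hα1.le hdist')
          (Finset.prod_nonneg fun v _ => twoGeoPMF_nonneg hα0.le hα1.le _)
    _ ≤ ∏ v, twoGeoPMF α (z v - y' v) :=
        Finset.pow_sum_mul_prod_le_prod hα0.le _
          (fun v _ => twoGeoPMF_nonneg hα0.le hα1.le _) fun v _ => by
            simpa only [sub_sub_sub_cancel_left] using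
              pow_natAbs_sub_mul_twoGeoPMF_le hα0.le hα1.le (z v - y v) (z v - y' v)

/-- Pointwise likelihood-ratio bound for the geometric mechanism: for inputs `y, y'`
at ℓ₁-distance at most `N`, the probability of any output `z` under input `y` is at
most `α^{-N}` times its probability under input `y'`. -/
theorem geometric_mechanism_pointwise_likelihood_ratio
    (α : ℝ) (hα0 : 0 < α) (hα1 : α < 1) (V : ℕ) (hV : 0 < V) (N : ℕ) (hN : 0 < N)
    (y y' : Fin V → ℕ)
    (hdist : ∑ v : Fin V, |(y v : ℤ) - (y' v : ℤ)| ≤ (N : ℤ))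
    (z : Fin V → ℤ) :
    ∏ v : Fin V, twoGeoPMF α (z v - (y v : ℤ)) ≤
      α ^ (-(N : ℤ)) * ∏ v : Fin V, twoGeoPMF α (z v - (y' v : ℤ)) :=
  geometric_mechanism_pointwise_likelihood_ratio_general α hα0 hα1 V N y y' hdist z
end

section
/- Let μ > 0, let α ∈ (0,1), and set θ = (1-α)/α. Let ỹ ∈ ℤ. Then the pmf of the privatized observation ỹ = y + τ, where y ~ Pois(μ) and τ ~ 2Geo(α) are independent, equals the double exponential mixture of a shifted Skellam pmf: Σ_{y=0}^∞ Pois(y; μ) · 2Geo(ỹ - y; α) = ∫_0^∞ ∫_0^∞ θ·exp(-θ·λ₊) · θ·exp(-θ·λ₋) · Skel(ỹ; μ + λ₊, λ₋) dλ₊ dλ₋. That is, a Poisson(μ) count privatized by the geometric mechanism with parameter α is marginally a Skellam random variable Skel(μ + λ₊, λ₋) with λ₊, λ₋ independently exponentially distributed with mean α/(1-α). -/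
/-!
`Skel(μ + λ₊, λ₋)` is the law of `Y + N₊ - N₋` for independent `Y ~ Pois(μ)`,
`N₊ ~ Pois(λ₊)`, `N₋ ~ Pois(λ₋)`. A Poisson variable whose rate is exponential with rate
`θ = (1 - α)/α` is geometric, `P(N = k) = (1 - α) α^k`, and the difference of two independent
such variables is two-sided geometric. So mixing out `λ₊` and `λ₋` turns `Y + N₊ - N₋` into
`Y + τ` with `τ ~ 2Geo(α)`. Every series and integral involved has nonnegative terms, which
justifies all the interchanges.
-/

open MeasureTheory

/-- The Poisson pmf with rate `λ`: `Pois(k; λ) = exp(-λ) · λ^k / k!`. -/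
noncomputable def poisPMF (lam : ℝ) (k : ℕ) : ℝ :=
  Real.exp (-lam) * lam ^ k / (Nat.factorial k)

/-- The Skellam pmf with rates `λ₁, λ₂`, the distribution of the difference of two
independent Poisson random variables:
`Skel(τ; λ₁, λ₂) = Σ_{m=0}^∞ Pois(m + τ⁺; λ₁) · Pois(m + τ⁻; λ₂)`. -/
noncomputable def skelPMF (lam₁ lam₂ : ℝ) (τ : ℤ) : ℝ :=
  ∑' m : ℕ, poisPMF lam₁ (m + τ.toNat) * poisPMF lam₂ (m + (-τ).toNat)

open Real Set

noncomputable def geomPMF (α : ℝ) (k : ℕ) : ℝ := (1 - α) * α ^ k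

section Poisson

lemma poisPMF_nonneg {lam : ℝ} (h : 0 ≤ lam) (k : ℕ) : 0 ≤ poisPMF lam k := by
  unfold poisPMF; positivity

lemma summable_poisPMF_comp_add (lam : ℝ) (a : ℕ) : Summable fun m : ℕ => poisPMF lam (m + a) := by
  refine ((Real.summable_pow_div_factorial lam).comp_injective (add_left_injective a)).mul_left
    (exp (-lam)) |>.congr fun m => ?_
  simp only [Function.comp, poisPMF, mul_div_assoc]

lemma summable_poisPMF (lam : ℝ) : Summable (poisPMF lam) := by
  simpa using summable_poisPMF_comp_add lam 0

lemma poisPMF_add (ν t : ℝ) (n : ℕ) :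
    poisPMF (ν + t) n = ∑ j ∈ Finset.range (n + 1), poisPMF ν j * poisPMF t (n - j) := by
  simp only [poisPMF, neg_add, exp_add, add_pow, Finset.mul_sum, Finset.sum_div]
  refine Finset.sum_congr rfl fun j hj => ?_
  rw [Nat.cast_choose ℝ (Finset.mem_range_succ_iff.1 hj)]
  field_simp

end Poisson

section Geometric

variable {α : ℝ}

lemma geomPMF_nonneg (hα0 : 0 ≤ α) (hα1 : α ≤ 1) (k : ℕ) : 0 ≤ geomPMF α k :=
  mul_nonneg (sub_nonneg.2 hα1) (pow_nonneg hα0 k)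

lemma geomPMF_le_one (hα0 : 0 ≤ α) (hα1 : α ≤ 1) (k : ℕ) : geomPMF α k ≤ 1 :=
  mul_le_one₀ (by linarith) (pow_nonneg hα0 k) (pow_le_one₀ hα0 hα1)

lemma summable_geomPMF_comp_add (hα0 : 0 ≤ α) (hα1 : α < 1) (b : ℕ) :
    Summable fun m : ℕ => geomPMF α (m + b) := by
  refine ((summable_geometric_of_lt_one hα0 hα1).mul_left ((1 - α) * α ^ b)).congr fun m => ?_
  rw [geomPMF, pow_add]; ring

lemma tsum_geomPMF_mul_geomPMF (hα0 : 0 ≤ α) (hα1 : α < 1) (p q : ℕ) :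
    ∑' m : ℕ, geomPMF α (m + p) * geomPMF α (m + q) = (1 - α) / (1 + α) * α ^ (p + q) := by
  have hterm : ∀ m : ℕ, geomPMF α (m + p) * geomPMF α (m + q)
      = (1 - α) ^ 2 * α ^ (p + q) * (α ^ 2) ^ m := fun m => by
    simp only [geomPMF, pow_add, ← pow_mul]; ring
  rw [tsum_congr hterm, tsum_mul_left, tsum_geometric_of_lt_one (by positivity) (by nlinarith)]
  rw [show 1 - α ^ 2 = (1 - α) * (1 + α) by ring]
  field_simp

/-- `2Geo(τ - j)` is the law of `G₁ - G₂` for independent geometric `G₁, G₂`, the event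
`G₁ - G₂ = τ - j` being `G₁ = m + τ⁺ - j`, `G₂ = m + τ⁻`. -/
lemma tsum_ite_geomPMF_mul_geomPMF (hα0 : 0 ≤ α) (hα1 : α < 1) (τ : ℤ) (j : ℕ) :
    ∑' m : ℕ, (if j ≤ m + τ.toNat then
        geomPMF α (m + (-τ).toNat) * geomPMF α (m + τ.toNat - j) else 0)
      = twoGeoPMF α (τ - j) := by
  set f : ℕ → ℝ := fun m => if j ≤ m + τ.toNat then
    geomPMF α (m + (-τ).toNat) * geomPMF α (m + τ.toNat - j) else 0
  have hsupp : f.support ⊆ range fun k => (j - τ.toNat) + k := by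
    intro m hm
    have hjm : j ≤ m + τ.toNat := by by_contra h; exact hm (if_neg h)
    exact ⟨m - (j - τ.toNat), show j - τ.toNat + (m - (j - τ.toNat)) = m by omega⟩
  have hshift : ∀ k : ℕ, f ((j - τ.toNat) + k)
      = geomPMF α (k + ((j - τ.toNat) + (-τ).toNat)) * geomPMF α (k + (τ.toNat - j)) := by
    intro k
    simp only [f, if_pos (show j ≤ (j - τ.toNat) + k + τ.toNat by omega)]
    congr 2 <;> omega
  rw [← (add_right_injective (j - τ.toNat)).tsum_eq hsupp, tsum_congr hshift,
    tsum_geomPMF_mul_geomPMF hα0 hα1, twoGeoPMF]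
  congr 2
  omega

lemma sum_mul_geomPMF_le_tsum (hα0 : 0 ≤ α) (hα1 : α ≤ 1) {p : ℕ → ℝ}
    (hp : ∀ j, 0 ≤ p j) (hps : Summable p) (n : ℕ) :
    ∑ j ∈ Finset.range (n + 1), p j * geomPMF α (n - j) ≤ ∑' j, p j :=
  calc ∑ j ∈ Finset.range (n + 1), p j * geomPMF α (n - j)
      ≤ ∑ j ∈ Finset.range (n + 1), p j :=
        Finset.sum_le_sum fun j _ => mul_le_of_le_one_right (hp j) (geomPMF_le_one hα0 hα1 _)
    _ ≤ ∑' j, p j := hps.sum_le_tsum _ fun j _ => hp j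

/-- `(X + G₁) - G₂ = X + (G₁ - G₂)` in law, for `X` with weights `p` and independent
geometric `G₁, G₂`. -/
lemma tsum_geomPMF_mul_sum_eq_tsum_mul_twoGeoPMF (hα0 : 0 ≤ α) (hα1 : α < 1) {p : ℕ → ℝ}
    (hp : ∀ j, 0 ≤ p j) (hps : Summable p) (τ : ℤ) :
    ∑' m : ℕ, geomPMF α (m + (-τ).toNat) *
        ∑ j ∈ Finset.range (m + τ.toNat + 1), p j * geomPMF α (m + τ.toNat - j)
      = ∑' j : ℕ, p j * twoGeoPMF α (τ - j) := by
  set a := τ.toNat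
  set b := (-τ).toNat
  set F : ℕ → ℕ → ℝ := fun m j =>
    p j * if j ≤ m + a then geomPMF α (m + b) * geomPMF α (m + a - j) else 0
  have hG := geomPMF_nonneg hα0 hα1.le
  have hF_nonneg : ∀ m j, 0 ≤ F m j := fun m j =>
    mul_nonneg (hp j) (by split_ifs; exacts [mul_nonneg (hG _) (hG _), le_rfl])
  have hF_out : ∀ m, ∀ j ∉ Finset.range (m + a + 1), F m j = 0 := fun m j hj => by
    have hja : ¬j ≤ m + a := by rw [Finset.mem_range] at hj; omega
    simp only [F, if_neg hja, mul_zero]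
  have hrow : ∀ m, geomPMF α (m + b) *
      ∑ j ∈ Finset.range (m + a + 1), p j * geomPMF α (m + a - j) = ∑' j, F m j := fun m => by
    rw [tsum_eq_sum (hF_out m), Finset.mul_sum]
    refine Finset.sum_congr rfl fun j hj => ?_
    simp only [F, if_pos (Finset.mem_range_succ_iff.1 hj)]
    ring
  have hcol : ∀ j, ∑' m, F m j = p j * twoGeoPMF α (τ - j) := fun j => by
    rw [tsum_mul_left, tsum_ite_geomPMF_mul_geomPMF hα0 hα1]
  have hrow_le : ∀ m, ∑' j, F m j ≤ geomPMF α (m + b) * ∑' j, p j := fun m => by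
    rw [← hrow m]
    exact mul_le_mul_of_nonneg_left (sum_mul_geomPMF_le_tsum hα0 hα1.le hp hps _) (hG _)
  have hF_summable : Summable (Function.uncurry F) := by
    refine (summable_prod_of_nonneg fun x => hF_nonneg x.1 x.2).2
      ⟨fun m => summable_of_ne_finset_zero (hF_out m), ?_⟩
    exact Summable.of_nonneg_of_le (fun m => tsum_nonneg (hF_nonneg m)) hrow_le
      ((summable_geomPMF_comp_add hα0 hα1 b).mul_right _)
  calc _ = ∑' m, ∑' j, F m j := tsum_congr hrow
    _ = ∑' j, ∑' m, F m j := hF_summable.tsum_comm.symm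
    _ = _ := tsum_congr hcol

end Geometric

lemma integral_tsum_mul_of_nonneg {X : Type*} [MeasurableSpace X] {μ : Measure X}
    {c : ℕ → ℝ} {P : ℕ → X → ℝ} {B : ℝ} (hc : ∀ m, 0 ≤ c m) (hcs : Summable c)
    (hP : ∀ m, Integrable (P m) μ) (hP_nonneg : ∀ m, 0 ≤ᵐ[μ] P m)
    (hPB : ∀ m, ∫ x, P m x ∂μ ≤ B) :
    ∫ x, ∑' m, c m * P m x ∂μ = ∑' m, c m * ∫ x, P m x ∂μ := by
  have hnorm : ∀ m, ∫ x, ‖c m * P m x‖ ∂μ = c m * ∫ x, P m x ∂μ := fun m => by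
    rw [← integral_const_mul]
    refine integral_congr_ae ?_
    filter_upwards [hP_nonneg m] with x hx
    exact Real.norm_of_nonneg (mul_nonneg (hc m) hx)
  have hB : 0 ≤ B := (integral_nonneg_of_ae (hP_nonneg 0)).trans (hPB 0)
  rw [← integral_tsum_of_summable_integral_norm fun m => (hP m).const_mul (c m)]
  · simp_rw [integral_const_mul]
  · simp_rw [hnorm]
    exact Summable.of_nonneg_of_le
      (fun m => mul_nonneg (hc m) (integral_nonneg_of_ae (hP_nonneg m)))
      (fun m => mul_le_mul_of_nonneg_left (hPB m) (hc m)) (hcs.mul_right B)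

lemma integral_pow_mul_exp_neg_mul (k : ℕ) {b : ℝ} (hb : 0 < b) :
    ∫ t in Ioi (0 : ℝ), t ^ k * exp (-(b * t)) = k.factorial / b ^ (k + 1) := by
  have h := integral_rpow_mul_exp_neg_mul_Ioi (a := k + 1) (by positivity) hb
  rw [add_sub_cancel_right, Real.Gamma_nat_eq_factorial] at h
  convert h using 1
  · simp_rw [rpow_natCast]
  · rw [show (k : ℝ) + 1 = ((k + 1 : ℕ) : ℝ) by push_cast; ring, rpow_natCast, one_div, inv_pow]
    field_simp

lemma integrableOn_pow_mul_exp_neg_mul (k : ℕ) {b : ℝ} (hb : 0 < b) :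
    IntegrableOn (fun t : ℝ => t ^ k * exp (-(b * t))) (Ioi 0) :=
  Integrable.of_integral_ne_zero <| by
    rw [integral_pow_mul_exp_neg_mul k hb]
    positivity

section ExponentialMixture

variable {α : ℝ}

lemma exp_mul_poisPMF_eq (hα0 : 0 < α) (n : ℕ) (t : ℝ) :
    (1 - α) / α * exp (-((1 - α) / α) * t) * poisPMF t n
      = (1 - α) / α / n.factorial * (t ^ n * exp (-(α⁻¹ * t))) := by
  rw [poisPMF, show -(α⁻¹ * t) = -((1 - α) / α) * t + -t by field_simp; ring, exp_add]
  ring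

lemma integrableOn_exp_mul_poisPMF (hα0 : 0 < α) (n : ℕ) :
    IntegrableOn (fun t => (1 - α) / α * exp (-((1 - α) / α) * t) * poisPMF t n) (Ioi 0) := by
  simp_rw [exp_mul_poisPMF_eq hα0]
  exact (integrableOn_pow_mul_exp_neg_mul n (inv_pos.2 hα0)).const_mul _

lemma integral_exp_mul_poisPMF (hα0 : 0 < α) (n : ℕ) :
    ∫ t in Ioi (0 : ℝ), (1 - α) / α * exp (-((1 - α) / α) * t) * poisPMF t n = geomPMF α n := by
  simp_rw [exp_mul_poisPMF_eq hα0]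
  rw [integral_const_mul, integral_pow_mul_exp_neg_mul n (inv_pos.2 hα0), geomPMF, inv_pow]
  field_simp
  ring

lemma exp_mul_poisPMF_add_eq (ν t : ℝ) (n : ℕ) :
    (1 - α) / α * exp (-((1 - α) / α) * t) * poisPMF (ν + t) n
      = ∑ j ∈ Finset.range (n + 1),
          poisPMF ν j * ((1 - α) / α * exp (-((1 - α) / α) * t) * poisPMF t (n - j)) := by
  rw [poisPMF_add, Finset.mul_sum]
  exact Finset.sum_congr rfl fun j _ => by ring

lemma integrableOn_exp_mul_poisPMF_add (hα0 : 0 < α) (ν : ℝ) (n : ℕ) :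
    IntegrableOn (fun t => (1 - α) / α * exp (-((1 - α) / α) * t) * poisPMF (ν + t) n)
      (Ioi 0) := by
  simp_rw [exp_mul_poisPMF_add_eq ν]
  exact integrable_finsetSum _ fun j _ => (integrableOn_exp_mul_poisPMF hα0 _).const_mul _

lemma integral_exp_mul_poisPMF_add (hα0 : 0 < α) (ν : ℝ) (n : ℕ) :
    ∫ t in Ioi (0 : ℝ), (1 - α) / α * exp (-((1 - α) / α) * t) * poisPMF (ν + t) n
      = ∑ j ∈ Finset.range (n + 1), poisPMF ν j * geomPMF α (n - j) := by
  simp_rw [exp_mul_poisPMF_add_eq ν]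
  rw [integral_finsetSum _ fun j _ => (integrableOn_exp_mul_poisPMF hα0 _).const_mul _]
  simp_rw [integral_const_mul, integral_exp_mul_poisPMF hα0]

lemma integral_exp_mul_skelPMF (hα0 : 0 < α) (hα1 : α < 1) {ν : ℝ} (hν : 0 ≤ ν) (τ : ℤ) :
    ∫ t in Ioi (0 : ℝ), (1 - α) / α * exp (-((1 - α) / α) * t) * skelPMF ν t τ
      = ∑' m : ℕ, poisPMF ν (m + τ.toNat) * geomPMF α (m + (-τ).toNat) := by
  have hθ : 0 < (1 - α) / α := div_pos (sub_pos.2 hα1) hα0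
  have hrw : ∀ t : ℝ, (1 - α) / α * exp (-((1 - α) / α) * t) * skelPMF ν t τ
      = ∑' m : ℕ, poisPMF ν (m + τ.toNat) *
          ((1 - α) / α * exp (-((1 - α) / α) * t) * poisPMF t (m + (-τ).toNat)) := fun t => by
    rw [skelPMF, ← tsum_mul_left]
    exact tsum_congr fun m => by ring
  simp_rw [hrw]
  rw [integral_tsum_mul_of_nonneg (B := 1) (fun m => poisPMF_nonneg hν _)
    (summable_poisPMF_comp_add ν _) (fun m => integrableOn_exp_mul_poisPMF hα0 _)
    (fun m => ae_restrict_of_forall_mem measurableSet_Ioi fun t ht =>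
      mul_nonneg (by positivity) (poisPMF_nonneg (le_of_lt ht) _))
    (fun m => (integral_exp_mul_poisPMF hα0 _).trans_le (geomPMF_le_one hα0.le hα1.le _))]
  simp_rw [integral_exp_mul_poisPMF hα0]

lemma integral_exp_mul_tsum_poisPMF_add_mul_geomPMF (hα0 : 0 < α) (hα1 : α < 1) {μ : ℝ}
    (hμ : 0 ≤ μ) (a b : ℕ) :
    ∫ t in Ioi (0 : ℝ), (1 - α) / α * exp (-((1 - α) / α) * t) *
        ∑' m : ℕ, poisPMF (μ + t) (m + a) * geomPMF α (m + b)
      = ∑' m : ℕ, geomPMF α (m + b) *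
          ∑ j ∈ Finset.range (m + a + 1), poisPMF μ j * geomPMF α (m + a - j) := by
  have hθ : 0 < (1 - α) / α := div_pos (sub_pos.2 hα1) hα0
  have hrw : ∀ t : ℝ, (1 - α) / α * exp (-((1 - α) / α) * t) *
        ∑' m : ℕ, poisPMF (μ + t) (m + a) * geomPMF α (m + b)
      = ∑' m : ℕ, geomPMF α (m + b) *
          ((1 - α) / α * exp (-((1 - α) / α) * t) * poisPMF (μ + t) (m + a)) := fun t => by
    rw [← tsum_mul_left]
    exact tsum_congr fun m => by ring
  simp_rw [hrw]
  rw [integral_tsum_mul_of_nonneg (fun m => geomPMF_nonneg hα0.le hα1.le _)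
    (summable_geomPMF_comp_add hα0.le hα1 b) (fun m => integrableOn_exp_mul_poisPMF_add hα0 μ _)
    (fun m => ae_restrict_of_forall_mem measurableSet_Ioi fun t ht =>
      mul_nonneg (by positivity) (poisPMF_nonneg (by linarith [mem_Ioi.1 ht]) _))
    (fun m => (integral_exp_mul_poisPMF_add hα0 μ _).trans_le
      (sum_mul_geomPMF_le_tsum hα0.le hα1.le (poisPMF_nonneg hμ) (summable_poisPMF μ) _))]
  simp_rw [integral_exp_mul_poisPMF_add hα0 μ]

end ExponentialMixture

/-- A `Pois(μ)` count privatized by the geometric mechanism with parameter `α` is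
marginally a Skellam random variable `Skel(μ + λ₊, λ₋)` with `λ₊, λ₋` independently
exponentially distributed with rate `θ = (1-α)/α` (mean `α/(1-α)`). -/
theorem privatized_poisson_is_exponentially_randomized_skellam
    (μ : ℝ) (hμ : 0 < μ) (α : ℝ) (hα0 : 0 < α) (hα1 : α < 1)
    (θ : ℝ) (hθ : θ = (1 - α) / α) (ytilde : ℤ) :
    ∑' y : ℕ, poisPMF μ y * twoGeoPMF α (ytilde - (y : ℤ))
      = ∫ lamp in Set.Ioi (0 : ℝ), ∫ lamm in Set.Ioi (0 : ℝ),
          θ * Real.exp (-θ * lamp) * (θ * Real.exp (-θ * lamm)) *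
            skelPMF (μ + lamp) lamm ytilde := by
  subst hθ
  have hinner : ∀ lamp ∈ Ioi (0 : ℝ),
      ∫ lamm in Ioi (0 : ℝ), (1 - α) / α * exp (-((1 - α) / α) * lamp) *
          ((1 - α) / α * exp (-((1 - α) / α) * lamm)) * skelPMF (μ + lamp) lamm ytilde
        = (1 - α) / α * exp (-((1 - α) / α) * lamp) *
          ∑' m : ℕ, poisPMF (μ + lamp) (m + ytilde.toNat) * geomPMF α (m + (-ytilde).toNat) :=
    fun lamp hlamp => by
      simp_rw [mul_assoc ((1 - α) / α * exp (-((1 - α) / α) * lamp))]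
      rw [integral_const_mul,
        integral_exp_mul_skelPMF hα0 hα1 (by linarith [mem_Ioi.1 hlamp] : 0 ≤ μ + lamp)]
  rw [setIntegral_congr_fun measurableSet_Ioi hinner,
    integral_exp_mul_tsum_poisPMF_add_mul_geomPMF hα0 hα1 hμ.le,
    tsum_geomPMF_mul_sum_eq_tsum_mul_twoGeoPMF hα0.le hα1 (poisPMF_nonneg hμ.le)
      (summable_poisPMF μ)]
end
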